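/- Let S be a semigroup satisfying conditions (A), (B), (C), and let Q be the semigroup of ~-classes of Σ. If [a,b] and [b,c] are elements of Q (i.e., r(a) = r(b) = r(c)), then [a,b][b,c] = [a,c]. -/

import Mathlib

/-- The bicyclic semigroup `𝓑` carried by `ℕ × ℕ`, an element being `(r, l)`;
`(m,n)(p,q) = (m - n + t, q - p + t)` with `t = max n p`. -/
structure Bicyclic where
  r : ℕ
  l : ℕ

instance : Mul Bicyclic :=
  ⟨fun x y => ⟨x.r + (max x.l y.r - x.l), y.l + (max x.l y.r - y.r)⟩⟩

/-- The inverse `(m,n)⁻¹ = (n,m)` in the bicyclic semigroup. -/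
def Bicyclic.inv (x : Bicyclic) : Bicyclic := ⟨x.l, x.r⟩

/-- `T` is a left I-order in the bicyclic semigroup `𝓑`. -/
def IsLeftIOrderBic (T : Set Bicyclic) : Prop :=
  ∀ q : Bicyclic, ∃ a ∈ T, ∃ b ∈ T, q = a.inv * b

/-- `r a`, the first coordinate of `φ a` in `𝓑`. -/
def rr {S : Type*} [Mul S] (φ : S →ₙ* Bicyclic) (a : S) : ℕ := (φ a).r

/-- `l a`, the second coordinate of `φ a` in `𝓑`. -/
def ll {S : Type*} [Mul S] (φ : S →ₙ* Bicyclic) (a : S) : ℕ := (φ a).l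

/-- Condition (A): the image of `φ` is a left I-order in `𝓑`. -/
def CondA {S : Type*} [Mul S] (φ : S →ₙ* Bicyclic) : Prop :=
  IsLeftIOrderBic (Set.range (⇑φ))

/-- Condition (B)(i): if `l x, l y ≥ r a` and `x * a = y * a` then `x = y`. -/
def CondBi {S : Type*} [Mul S] (φ : S →ₙ* Bicyclic) : Prop :=
  ∀ x y a : S, rr φ a ≤ ll φ x → rr φ a ≤ ll φ y → x * a = y * a → x = y

/-- Condition (B)(ii): if `r x, r y ≥ l a` and `a * x = a * y` then `x = y`. -/
def CondBii {S : Type*} [Mul S] (φ : S →ₙ* Bicyclic) : Prop :=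
  ∀ x y a : S, ll φ a ≤ rr φ x → ll φ a ≤ rr φ y → a * x = a * y → x = y

/-- Condition (C): for all `b c` there are `x y` with `x * b = y * c`,
`r x = r y`, `l x = r b - l b + max (l b) (l c)` and
`l y = r c - l c + max (l b) (l c)`. -/
def CondC {S : Type*} [Mul S] (φ : S →ₙ* Bicyclic) : Prop :=
  ∀ b c : S, ∃ x y : S, x * b = y * c ∧ rr φ x = rr φ y ∧
    ll φ x = rr φ b + (max (ll φ b) (ll φ c) - ll φ b) ∧
    ll φ y = rr φ c + (max (ll φ b) (ll φ c) - ll φ c)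

/-- `Σ = {(a,b) ∈ S × S : r a = r b}`. -/
abbrev Sig {S : Type*} [Mul S] (φ : S →ₙ* Bicyclic) : Type _ :=
  {p : S × S // rr φ p.1 = rr φ p.2}

/-- The relation `∼` on pairs: `(a,b) ∼ (c,d)` iff there are `x y` with
`x * a = y * c`, `x * b = y * d`, `l x = r a`, `l y = r c`, `r x = r y`. -/
def simP {S : Type*} [Mul S] (φ : S →ₙ* Bicyclic) (p q : S × S) : Prop :=
  ∃ x y : S, x * p.1 = y * q.1 ∧ x * p.2 = y * q.2 ∧
    ll φ x = rr φ p.1 ∧ ll φ y = rr φ q.1 ∧ rr φ x = rr φ y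

/-- The relation `∼` on `Σ`. -/
def sim {S : Type*} [Mul S] (φ : S →ₙ* Bicyclic) (p q : Sig φ) : Prop :=
  simP φ p.1 q.1

theorem rr_mul {S : Type*} [Mul S] (φ : S →ₙ* Bicyclic) (x a : S) :
    rr φ (x * a) = rr φ x + (max (ll φ x) (rr φ a) - ll φ x) := by
  simp only [rr, ll, map_mul]; rfl

theorem rr_mul_eq {S : Type*} [Mul S] (φ : S →ₙ* Bicyclic) {x a : S}
    (h : rr φ a ≤ ll φ x) : rr φ (x * a) = rr φ x := by
  have h1 := rr_mul φ x a
  have h2 : max (ll φ x) (rr φ a) = ll φ x := max_eq_left h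
  omega

theorem sig_mul_ok {S : Type*} [Mul S] (φ : S →ₙ* Bicyclic) {a b c d x y : S}
    (hab : rr φ a = rr φ b) (hcd : rr φ c = rr φ d)
    (hx : ll φ x = rr φ b + (max (ll φ b) (ll φ c) - ll φ b))
    (hy : ll φ y = rr φ c + (max (ll φ b) (ll φ c) - ll φ c))
    (hr : rr φ x = rr φ y) : rr φ (x * a) = rr φ (y * d) := by
  have h1 := rr_mul_eq φ (x := x) (a := a)
    (by have := le_max_left (ll φ b) (ll φ c); omega)
  have h2 := rr_mul_eq φ (x := y) (a := d)
    (by have := le_max_right (ll φ b) (ll φ c); omega)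
  omega

/-- The set `Q` of `∼`-classes of `Σ`. -/
def QT {S : Type*} [Mul S] (φ : S →ₙ* Bicyclic) : Type _ := Quot (sim φ)

/-- The `∼`-class `[a,b]` of an element of `Σ`. -/
def cls {S : Type*} [Mul S] (φ : S →ₙ* Bicyclic) (p : Sig φ) : QT φ :=
  Quot.mk _ p

/-- Packaging `(a, b)` with `r a = r b` as an element of `Σ`. -/
def mkSig {S : Type*} [Mul S] (φ : S →ₙ* Bicyclic) (a b : S)
    (h : rr φ a = rr φ b) : Sig φ := ⟨(a, b), h⟩

/-- A chosen witness `x` from condition (C) applied to `b, c`. -/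
noncomputable def cx {S : Type*} [Mul S] {φ : S →ₙ* Bicyclic} (hC : CondC φ)
    (b c : S) : S := (hC b c).choose

/-- A chosen witness `y` from condition (C) applied to `b, c`. -/
noncomputable def cy {S : Type*} [Mul S] {φ : S →ₙ* Bicyclic} (hC : CondC φ)
    (b c : S) : S := (hC b c).choose_spec.choose

theorem c_spec {S : Type*} [Mul S] {φ : S →ₙ* Bicyclic} (hC : CondC φ) (b c : S) :
    cx hC b c * b = cy hC b c * c ∧ rr φ (cx hC b c) = rr φ (cy hC b c) ∧
    ll φ (cx hC b c) = rr φ b + (max (ll φ b) (ll φ c) - ll φ b) ∧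
    ll φ (cy hC b c) = rr φ c + (max (ll φ b) (ll φ c) - ll φ c) :=
  (hC b c).choose_spec.choose_spec

/-- Representative-level multiplication: `(a,b) · (c,d) = (x * a, y * d)` where
`x, y` are the witnesses from condition (C) for `b, c`. -/
noncomputable def pairMul {S : Type*} [Mul S] {φ : S →ₙ* Bicyclic} (hC : CondC φ)
    (p q : Sig φ) : Sig φ :=
  ⟨(cx hC p.1.2 q.1.1 * p.1.1, cy hC p.1.2 q.1.1 * q.1.2),
    sig_mul_ok φ p.2 q.2 (c_spec hC p.1.2 q.1.1).2.2.1
      (c_spec hC p.1.2 q.1.1).2.2.2 (c_spec hC p.1.2 q.1.1).2.1⟩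

/-- The multiplication `[a,b][c,d] = [x*a, y*d]` on the set `Q` of `∼`-classes. -/
noncomputable def qmul {S : Type*} [Mul S] {φ : S →ₙ* Bicyclic} (hC : CondC φ)
    (u v : QT φ) : QT φ :=
  cls φ (pairMul hC (Quot.out u) (Quot.out v))

theorem ll_cx_self {S : Type*} [Mul S] {φ : S →ₙ* Bicyclic} (hC : CondC φ)
    (a : S) : ll φ (cx hC a a) = rr φ a := by
  have h := (c_spec hC a a).2.2.1
  have h2 : max (ll φ a) (ll φ a) = ll φ a := max_self _
  omega

/-- The embedding `θ : S → Q`, `a θ = [x, x*a]` for a chosen `x` with `l x = r a`. -/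
noncomputable def theta {S : Type*} [Mul S] {φ : S →ₙ* Bicyclic} (hC : CondC φ)
    (a : S) : QT φ :=
  cls φ ⟨(cx hC a a, cx hC a a * a), (rr_mul_eq φ (ll_cx_self hC a).ge).symm⟩

/-- The inverse `[a,b]⁻¹ = [b,a]` on `Q`. -/
noncomputable def qinv {S : Type*} [Mul S] {φ : S →ₙ* Bicyclic} (u : QT φ) :
    QT φ :=
  cls φ ⟨((Quot.out u).1.2, (Quot.out u).1.1), (Quot.out u).2.symm⟩

/-!
`qmul` multiplies arbitrary representatives `(a₁,b₁) ∼ (a,b)` and `(c₁,d₁) ∼ (b,c)`, using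
witnesses `s b₁ = t c₁` of (C), so one has to show `(s a₁, t d₁) ∼ (a, c)`. Applying (C) to
`s` and the first equivalence gives a common left multiple `w s a₁ = z a`; applying it once
more, together with the second equivalence, gives `k, m` with `k z b = m v b`, so (B)(i)
cancels `b`. Then `k (w t d₁) = k (z c)`, so (B)(ii) cancels `k`, and `(w, z)` witnesses
`(s a₁, t d₁) ∼ (a, c)`.
-/

section Mul

variable {S : Type*} [Mul S] {φ : S →ₙ* Bicyclic}

theorem ll_mul (φ : S →ₙ* Bicyclic) (x a : S) :
    ll φ (x * a) = ll φ a + (max (ll φ x) (rr φ a) - rr φ a) := by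
  simp only [rr, ll, map_mul]; rfl

theorem ll_mul_eq (φ : S →ₙ* Bicyclic) {x a : S} (h : ll φ x ≤ rr φ a) :
    ll φ (x * a) = ll φ a := by
  rw [ll_mul, max_eq_right h, Nat.sub_self, Nat.add_zero]

theorem CondC.exists_of_ll_eq (hC : CondC φ) {b c : S} (h : ll φ b = ll φ c) :
    ∃ x y : S, x * b = y * c ∧ rr φ x = rr φ y ∧ ll φ x = rr φ b ∧ ll φ y = rr φ c := by
  obtain ⟨x, y, hxy, hr, hlx, hly⟩ := hC b c
  exact ⟨x, y, hxy, hr, by omega, by omega⟩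

theorem simP.ll_fst_eq {p q : S × S} (h : simP φ p q) : ll φ p.1 = ll φ q.1 := by
  obtain ⟨x, y, h₁, -, hlx, hly, -⟩ := h
  rw [← ll_mul_eq φ hlx.le, ← ll_mul_eq φ hly.le, h₁]

theorem simP.ll_snd_eq {p q : S × S} (hp : rr φ p.1 = rr φ p.2) (hq : rr φ q.1 = rr φ q.2)
    (h : simP φ p q) : ll φ p.2 = ll φ q.2 := by
  obtain ⟨x, y, -, h₂, hlx, hly, -⟩ := h
  rw [← ll_mul_eq φ (hlx.trans hp).le, ← ll_mul_eq φ (hly.trans hq).le, h₂]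

theorem sim_refl (hC : CondC φ) (p : Sig φ) : sim φ p p := by
  obtain ⟨x, -, -, -, hlx, -⟩ := hC.exists_of_ll_eq (rfl : ll φ p.1.1 = ll φ p.1.1)
  exact ⟨x, x, rfl, rfl, hlx, hlx, rfl⟩

theorem sim_symm {p q : Sig φ} (h : sim φ p q) : sim φ q p := by
  obtain ⟨x, y, h₁, h₂, hlx, hly, hr⟩ := h
  exact ⟨y, x, h₁.symm, h₂.symm, hly, hlx, hr.symm⟩

end Mul

section Semigroup

variable {S : Type*} [Semigroup S] {φ : S →ₙ* Bicyclic}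

theorem sim_trans (hC : CondC φ) {p q r : Sig φ} (hpq : sim φ p q) (hqr : sim φ q r) :
    sim φ p r := by
  obtain ⟨x, y, h₁, h₂, hlx, hly, hrxy⟩ := hpq
  obtain ⟨u, v, k₁, k₂, hlu, hlv, hruv⟩ := hqr
  obtain ⟨s, t, hst, hrst, hls, hlt⟩ := hC.exists_of_ll_eq (hly.trans hlu.symm)
  refine ⟨s * x, t * v, ?_, ?_, ?_, ?_, ?_⟩
  · rw [mul_assoc, h₁, ← mul_assoc, hst, mul_assoc, k₁, ← mul_assoc]
  · rw [mul_assoc, h₂, ← mul_assoc, hst, mul_assoc, k₂, ← mul_assoc]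
  · rw [ll_mul_eq φ (by omega), hlx]
  · rw [ll_mul_eq φ (by omega), hlv]
  · rw [rr_mul_eq φ (by omega), rr_mul_eq φ (by omega), hrst]

theorem sim_equivalence (hC : CondC φ) : Equivalence (sim φ) :=
  ⟨sim_refl hC, sim_symm, sim_trans hC⟩

theorem sim_out_cls (hC : CondC φ) (p : Sig φ) : sim φ (Quot.out (cls φ p)) p :=
  (sim_equivalence hC).eqvGen_iff.mp (Quot.eqvGen_exact (Quot.out_eq _))

theorem simP_mul_of_simP (hBi : CondBi φ) (hBii : CondBii φ) (hC : CondC φ)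
    {a b c a₁ b₁ c₁ d₁ s t : S} (hab : rr φ a = rr φ b) (hbc : rr φ b = rr φ c)
    (hab₁ : rr φ a₁ = rr φ b₁) (hcd₁ : rr φ c₁ = rr φ d₁)
    (hp : simP φ (a₁, b₁) (a, b)) (hq : simP φ (c₁, d₁) (b, c))
    (hst : s * b₁ = t * c₁) (hrst : rr φ s = rr φ t)
    (hls : ll φ s = rr φ b₁) (hlt : ll φ t = rr φ c₁) :
    simP φ (s * a₁, t * d₁) (a, c) := by
  obtain ⟨x, y, hxa, hxb, hlx, hly, hrxy⟩ := hp
  obtain ⟨u, v, huc, hud, hlu, hlv, hruv⟩ := hq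
  dsimp only at hxa hxb hlx hly huc hud hlu hlv
  obtain ⟨w, g, hwg, hrwg, hlw, hlg⟩ := hC.exists_of_ll_eq (b := s) (c := x) (by omega)
  have hza : w * (s * a₁) = (g * y) * a := by rw [← mul_assoc, hwg, mul_assoc, hxa, mul_assoc]
  have hlz : ll φ (g * y) = rr φ a := by rw [ll_mul_eq φ (by omega), hly]
  have hrz : rr φ (g * y) = rr φ w := by rw [rr_mul_eq φ (by omega), hrwg]
  have hzb : (g * y) * b = (w * t) * c₁ := by
    rw [mul_assoc, ← hxb, ← mul_assoc, ← hwg, mul_assoc, hst, mul_assoc]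
  have hlwt : ll φ (w * t) = rr φ c₁ := by rw [ll_mul_eq φ (by omega), hlt]
  have hrwt : rr φ (w * t) = rr φ w := rr_mul_eq φ (by omega)
  obtain ⟨k, m, hkm, -, hlk, hlm⟩ := hC.exists_of_ll_eq (hlwt.trans hlu.symm)
  have hkz : k * (g * y) = m * v := by
    refine hBi _ _ b ?_ ?_ ?_
    · rw [ll_mul_eq φ (by omega)]; omega
    · rw [ll_mul_eq φ (by omega)]; omega
    · rw [mul_assoc, hzb, ← mul_assoc, hkm, mul_assoc, huc, ← mul_assoc]
  have hwtd : w * (t * d₁) = (g * y) * c := by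
    refine hBii _ _ k ?_ ?_ ?_
    · rw [rr_mul_eq φ (by rw [rr_mul_eq φ (by omega)]; omega)]; omega
    · rw [rr_mul_eq φ (by omega)]; omega
    · rw [← mul_assoc w, ← mul_assoc, hkm, mul_assoc, hud, ← mul_assoc, ← hkz, mul_assoc]
  refine ⟨w, g * y, hza, hwtd, ?_, hlz, hrz.symm⟩
  rw [hlw, rr_mul_eq φ (by omega)]

end Semigroup

theorem stmt14_general {S : Type*} [Semigroup S] (φ : S →ₙ* Bicyclic)
    (hBi : CondBi φ) (hBii : CondBii φ) (hC : CondC φ)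
    (a b c : S) (hab : rr φ a = rr φ b) (hbc : rr φ b = rr φ c) :
    qmul hC (cls φ (mkSig φ a b hab)) (cls φ (mkSig φ b c hbc)) =
      cls φ (mkSig φ a c (hab.trans hbc)) := by
  set p := Quot.out (cls φ (mkSig φ a b hab))
  set q := Quot.out (cls φ (mkSig φ b c hbc))
  have hp : simP φ p.1 (a, b) := sim_out_cls hC _
  have hq : simP φ q.1 (b, c) := sim_out_cls hC _
  have hlb : ll φ p.1.2 = ll φ q.1.1 := by
    rw [hp.ll_snd_eq p.2 hab, hq.ll_fst_eq]
  obtain ⟨hst, hrst, hls, hlt⟩ := c_spec hC p.1.2 q.1.1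
  rw [hlb, max_self, Nat.sub_self, Nat.add_zero] at hls hlt
  exact Quot.sound (simP_mul_of_simP hBi hBii hC hab hbc p.2 q.2 hp hq hst hrst hls hlt)

/-- `[a,b][b,c] = [a,c]`. -/
theorem stmt14 {S : Type*} [Semigroup S] (φ : S →ₙ* Bicyclic)
    (hA : CondA φ) (hBi : CondBi φ) (hBii : CondBii φ) (hC : CondC φ)
    (a b c : S) (hab : rr φ a = rr φ b) (hbc : rr φ b = rr φ c) :
    qmul hC (cls φ (mkSig φ a b hab)) (cls φ (mkSig φ b c hbc)) =
      cls φ (mkSig φ a c (hab.trans hbc)) :=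
  stmt14_general φ hBi hBii hC a b c hab hbc
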